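/- Let T₀ be a half-integral symmetric 3×3 matrix with (1,1)-entry equal to 1. Then the set of rank-one T ∈ J_R whose projection [c₁,c₂,c₃; tr(x₁), tr(x₂), tr(x₃)] equals T₀ is finite, and for every such T the content d_T (largest integer with d_T⁻¹T ∈ J_R) equals 1. -/

import Mathlib

open Quaternion

/-- Hamilton's rational quaternions. -/
abbrev H : Type := ℍ[ℚ]

/-- The octonions as the Cayley–Dickson double `H ⊕ H` with `γ = -1`. -/
abbrev O : Type := H × H

/-- Octonion multiplication: `(x₁,y₁)(x₂,y₂) = (x₁x₂ - y₂* y₁, y₂x₁ + y₁x₂*)`. -/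
def omul (z w : O) : O :=
  (z.1 * w.1 - star w.2 * z.2, w.2 * z.1 + z.2 * star w.1)

/-- Octonion conjugation `(x,y)* = (x*, -y)`. -/
def ostar (z : O) : O := (star z.1, -z.2)

/-- The unit octonion. -/
def oone : O := (1, 0)

/-- The positive-definite octonion norm `n((x,y)) = n_H(x) + n_H(y)`. -/
def onorm (z : O) : ℚ := normSq z.1 + normSq z.2

/-- The octonion trace `tr((x,y)) = tr_H(x)`. -/
def otr (z : O) : ℚ := (z.1 + star z.1).re

/-- The bilinear form `(x,y) = n(x+y) - n(x) - n(y)`. -/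
def obil (x y : O) : ℚ := onorm (x + y) - onorm x - onorm y

/-- The trilinear form `(x,y,z) = tr(x(yz))`. -/
def otri (x y z : O) : ℚ := otr (omul x (omul y z))

/-- Elements of `J = H₃(O)`, written `[c₁,c₂,c₃;x₁,x₂,x₃]`. -/
abbrev Jt : Type := ℚ × ℚ × ℚ × O × O × O

def mkJ (c₁ c₂ c₃ : ℚ) (x₁ x₂ x₃ : O) : Jt := (c₁, c₂, c₃, x₁, x₂, x₃)

/-- The cubic norm on `J = H₃(O)`. -/
def NJ : Jt → ℚ
  | (c₁, c₂, c₃, x₁, x₂, x₃) =>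
    c₁ * c₂ * c₃ - c₁ * onorm x₁ - c₂ * onorm x₂ - c₃ * onorm x₃ + otri x₁ x₂ x₃

/-- The trace pairing `(X,X')_I` on `J`. -/
def pairI : Jt → Jt → ℚ
  | (c₁, c₂, c₃, x₁, x₂, x₃), (d₁, d₂, d₃, y₁, y₂, y₃) =>
    c₁ * d₁ + c₂ * d₂ + c₃ * d₃ + obil x₁ y₁ + obil x₂ y₂ + obil x₃ y₃

/-- The adjoint `ι(X^#)`. -/
def sharpJ : Jt → Jt
  | (c₁, c₂, c₃, x₁, x₂, x₃) =>
    (c₂ * c₃ - onorm x₁, c₃ * c₁ - onorm x₂, c₁ * c₂ - onorm x₃,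
      ostar (omul x₂ x₃) - c₁ • x₁, ostar (omul x₃ x₁) - c₂ • x₂,
      ostar (omul x₁ x₂) - c₃ • x₃)

/-- The element `I = [1,1,1;0,0,0]`. -/
def IJ : Jt := mkJ 1 1 1 0 0 0

/-- The octonion `β = ½(-1+i+j+k, 1+i+j+k)`. -/
def βO : O := (⟨-1/2, 1/2, 1/2, 1/2⟩, ⟨1/2, 1/2, 1/2, 1/2⟩)

/-- The element `E = [2,2,2;β,β,β]`. -/
def EJ : Jt := mkJ 2 2 2 βO βO βO


/-- The octonions `i, j, k, e = (0,1)` and `h = ½(i+j+k+e)`. -/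
def iO : O := (⟨0, 1, 0, 0⟩, 0)
def jO : O := (⟨0, 0, 1, 0⟩, 0)
def kO : O := (⟨0, 0, 0, 1⟩, 0)
def eO : O := (0, 1)
def hO : O := (⟨0, 1/2, 1/2, 1/2⟩, ⟨1/2, 0, 0, 0⟩)

/-- A `ℤ`-basis of Coxeter's order `R` of integral octonions:
`jh, e, -h, j, ih, 1, eh, ke`. -/
def coxBasis : Fin 8 → O :=
  ![omul jO hO, eO, -hO, jO, omul iO hO, oone, omul eO hO, omul kO eO]

/-- Membership in Coxeter's maximal order `R ⊆ O` of integral octonions. -/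
def inR (x : O) : Prop := ∃ a : Fin 8 → ℤ, x = ∑ i, (a i : ℚ) • coxBasis i

/-- Membership in the integral lattice `J_R ⊆ J`: diagonal entries in `ℤ`, off-diagonal
entries in Coxeter's order `R`. -/
def inJR : Jt → Prop
  | (c₁, c₂, c₃, x₁, x₂, x₃) =>
    (∃ n : ℤ, c₁ = n) ∧ (∃ n : ℤ, c₂ = n) ∧ (∃ n : ℤ, c₃ = n) ∧ inR x₁ ∧ inR x₂ ∧ inR x₃

/-- The projection of `T = [c₁,c₂,c₃;x₁,x₂,x₃] ∈ J` to a symmetric `3×3` matrix with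
diagonal `c₁,c₂,c₃` and off-diagonal entries `tr(xᵢ)/2`. -/
def projJ : Jt → Matrix (Fin 3) (Fin 3) ℚ
  | (c₁, c₂, c₃, x₁, x₂, x₃) =>
    Matrix.of ![![c₁, otr x₃ / 2, otr x₂ / 2],
                ![otr x₃ / 2, c₂, otr x₁ / 2],
                ![otr x₂ / 2, otr x₁ / 2, c₃]]

/-! Because `c₁ = 1`, the equation `T# = 0` forces `c₃ = n(x₂)`, `c₂ = n(x₃)` and
`x₁ = (x₂x₃)*`, so a rank-one `T` over `T₀` is determined by `(x₂, x₃)`, a pair of elements of `R`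
of prescribed norms. There are finitely many such elements: the coordinates of an element of `R`
are half-integers and its norm is the sum of their squares. The content is `1` because
`n⁻¹ c₁ = n⁻¹` must be an integer. -/

def octCoords : O →ₗ[ℚ] Fin 8 → ℚ where
  toFun x := ![x.1.re, x.1.imI, x.1.imJ, x.1.imK, x.2.re, x.2.imI, x.2.imJ, x.2.imK]
  map_add' x y := by ext k; fin_cases k <;> rfl
  map_smul' c x := by ext k; fin_cases k <;> rfl

lemma octCoords_injective : Function.Injective octCoords := by
  intro x y h
  have := congrFun h
  ext
  exacts [this 0, this 1, this 2, this 3, this 4, this 5, this 6, this 7]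

lemma onorm_eq_sum_sq (x : O) : onorm x = ∑ k, octCoords x k ^ 2 := by
  simp only [onorm, normSq_def', octCoords, LinearMap.coe_mk, AddHom.coe_mk, Fin.sum_univ_eight,
    Matrix.cons_val_zero, Matrix.cons_val_one, Matrix.cons_val]
  ring

lemma sq_octCoords_le_onorm (x : O) (k : Fin 8) : octCoords x k ^ 2 ≤ onorm x := by
  rw [onorm_eq_sum_sq]
  exact Finset.single_le_sum (fun i _ => sq_nonneg (octCoords x i)) (Finset.mem_univ k)

lemma coxBasis_exists_two_mul_octCoords_eq (i k : Fin 8) :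
    ∃ m : ℤ, 2 * octCoords (coxBasis i) k = m := by
  fin_cases i <;> fin_cases k <;>
    simp only [coxBasis, octCoords, omul, LinearMap.coe_mk, AddHom.coe_mk, Fin.reduceFinMk,
      Matrix.cons_val, Quaternion.re_mul, Quaternion.imI_mul, Quaternion.imJ_mul,
      Quaternion.imK_mul, Quaternion.re_star, Quaternion.imI_star, Quaternion.imJ_star,
      Quaternion.imK_star, Quaternion.re_sub, Quaternion.imI_sub, Quaternion.imJ_sub,
      Quaternion.imK_sub, Quaternion.re_add, Quaternion.imI_add, Quaternion.imJ_add,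
      Quaternion.imK_add, Prod.fst_neg, Prod.snd_neg, Quaternion.re_neg, Quaternion.imI_neg,
      Quaternion.imJ_neg, Quaternion.imK_neg] <;>
    norm_num [iO, jO, kO, eO, hO, oone] <;>
    -- the doubled coordinates of the basis vectors are among `0, ±1, 2`
    first
      | (refine ⟨0, ?_⟩; norm_num; done)
      | (refine ⟨1, ?_⟩; norm_num; done)
      | (refine ⟨-1, ?_⟩; norm_num; done)
      | (refine ⟨2, ?_⟩; norm_num)

lemma inR.exists_two_mul_octCoords_eq {x : O} (hx : inR x) (k : Fin 8) :
    ∃ m : ℤ, 2 * octCoords x k = m := by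
  obtain ⟨a, rfl⟩ := hx
  choose b hb using coxBasis_exists_two_mul_octCoords_eq
  refine ⟨∑ i, a i * b i k, ?_⟩
  simp only [map_sum, map_smul, Finset.sum_apply, Pi.smul_apply, smul_eq_mul, Finset.mul_sum,
    Int.cast_sum, Int.cast_mul, ← hb]
  exact Finset.sum_congr rfl fun i _ => by ring

lemma finite_setOf_half_int_sq_le (c : ℚ) :
    {q : ℚ | (∃ m : ℤ, 2 * q = m) ∧ q ^ 2 ≤ c}.Finite := by
  refine ((Set.finite_Icc (-⌈4 * c⌉) ⌈4 * c⌉).image fun m : ℤ => (m : ℚ) / 2).subset ?_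
  rintro q ⟨⟨m, hm⟩, hq⟩
  have hm_sq : (m : ℚ) ^ 2 ≤ 4 * c := by rw [← hm]; linarith
  have hm_sq_le : m ^ 2 ≤ ⌈4 * c⌉ := by exact_mod_cast hm_sq.trans (Int.le_ceil _)
  have habs : |m| ≤ ⌈4 * c⌉ := (Int.natCast_natAbs m ▸ Int.natAbs_le_self_sq m).trans hm_sq_le
  exact ⟨m, abs_le.mp habs, by simp only [← hm]; ring⟩

lemma finite_setOf_inR_onorm_eq (c : ℚ) : {x : O | inR x ∧ onorm x = c}.Finite := by
  refine Set.Finite.of_finite_image ?_ octCoords_injective.injOn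
  refine (Set.Finite.pi (t := fun _ : Fin 8 => {q : ℚ | (∃ m : ℤ, 2 * q = m) ∧ q ^ 2 ≤ c})
    fun _ => finite_setOf_half_int_sq_le c).subset ?_
  rintro _ ⟨x, ⟨hx, rfl⟩, rfl⟩ k -
  exact ⟨hx.exists_two_mul_octCoords_eq k, sq_octCoords_le_onorm x k⟩

lemma eq_mkJ_of_sharpJ_eq_zero {c₂ c₃ : ℚ} {x₁ x₂ x₃ : O}
    (h : sharpJ (1, c₂, c₃, x₁, x₂, x₃) = 0) :
    (1, c₂, c₃, x₁, x₂, x₃) = mkJ 1 (onorm x₃) (onorm x₂) (ostar (omul x₂ x₃)) x₂ x₃ := by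
  simp only [sharpJ, Prod.ext_iff, Prod.fst_zero, Prod.snd_zero, one_mul, mul_one, one_smul,
    sub_eq_zero] at h
  obtain ⟨-, hc₃, hc₂, hx₁, -⟩ := h
  simp only [mkJ, hc₂, hc₃, Prod.ext_iff, hx₁, and_self]

lemma finite_setOf_inJR_sharpJ_eq_zero (c₂ c₃ : ℚ) :
    {T : Jt | inJR T ∧ sharpJ T = 0 ∧ T.1 = 1 ∧ T.2.1 = c₂ ∧ T.2.2.1 = c₃}.Finite := by
  refine ((finite_setOf_inR_onorm_eq c₃).image2
    (fun x₂ x₃ => mkJ 1 (onorm x₃) (onorm x₂) (ostar (omul x₂ x₃)) x₂ x₃)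
    (finite_setOf_inR_onorm_eq c₂)).subset ?_
  rintro ⟨c₁, c₂, c₃, x₁, x₂, x₃⟩ ⟨⟨-, -, -, -, hx₂, hx₃⟩, hsharp, rfl : c₁ = 1, rfl, rfl⟩
  have hT := eq_mkJ_of_sharpJ_eq_zero hsharp
  exact ⟨x₂, ⟨hx₂, (congrArg (·.2.2.1) hT).symm⟩, x₃, ⟨hx₃, (congrArg (·.2.1) hT).symm⟩, hT.symm⟩

lemma eq_one_of_inJR_inv_smul {T : Jt} (h₁ : T.1 = 1) {n : ℤ} (hn : 0 < n)
    (h : inJR ((n : ℚ)⁻¹ • T)) : n = 1 := by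
  obtain ⟨⟨m, hm⟩, -⟩ := h
  rw [h₁, smul_eq_mul, mul_one] at hm
  have hnm : (n : ℚ) * m = 1 := by rw [← hm, mul_inv_cancel₀ (by exact_mod_cast hn.ne')]
  exact Int.eq_one_of_mul_eq_one_right hn.le (by exact_mod_cast hnm)

theorem rank_one_fiber_finite_and_primitive_general (T₀ : Matrix (Fin 3) (Fin 3) ℚ)
    (h11 : T₀ 0 0 = 1) :
    {T : Jt | inJR T ∧ T ≠ 0 ∧ sharpJ T = 0 ∧ projJ T = T₀}.Finite ∧
      ∀ T : Jt, (inJR T ∧ T ≠ 0 ∧ sharpJ T = 0 ∧ projJ T = T₀) →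
        ∀ n : ℤ, 0 < n → inJR (((n : ℚ))⁻¹ • T) → n = 1 := by
  have hdiag : ∀ T : Jt, projJ T = T₀ → T.1 = 1 ∧ T.2.1 = T₀ 1 1 ∧ T.2.2.1 = T₀ 2 2 := by
    rintro T rfl
    exact ⟨h11, rfl, rfl⟩
  refine ⟨(finite_setOf_inJR_sharpJ_eq_zero (T₀ 1 1) (T₀ 2 2)).subset ?_, ?_⟩
  · rintro T ⟨hR, -, hsharp, hproj⟩
    exact ⟨hR, hsharp, hdiag T hproj⟩
  · rintro T ⟨-, -, -, hproj⟩ n hn hscaled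
    exact eq_one_of_inJR_inv_smul (hdiag T hproj).1 hn hscaled

/-- Let `T₀` be a half-integral symmetric `3×3` matrix with `(1,1)`-entry equal to `1`.
The set of rank-one `T ∈ J_R` whose projection equals `T₀` is finite, and each such `T`
has content `d_T = 1`, i.e. the only positive integer `n` with `n⁻¹ T ∈ J_R` is `n = 1`. -/
theorem rank_one_fiber_finite_and_primitive (T₀ : Matrix (Fin 3) (Fin 3) ℚ)
    (hsymm : T₀.IsSymm) (h11 : T₀ 0 0 = 1)
    (hdiag : ∀ i, ∃ n : ℤ, T₀ i i = n) (hoff : ∀ i j, ∃ n : ℤ, 2 * T₀ i j = n) :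
    {T : Jt | inJR T ∧ T ≠ 0 ∧ sharpJ T = 0 ∧ projJ T = T₀}.Finite ∧
      ∀ T : Jt, (inJR T ∧ T ≠ 0 ∧ sharpJ T = 0 ∧ projJ T = T₀) →
        ∀ n : ℤ, 0 < n → inJR (((n : ℚ))⁻¹ • T) → n = 1 :=
  rank_one_fiber_finite_and_primitive_general T₀ h11
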